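/- Let X be a mixture set, T ≥ 1, and ≽ a binary relation on X^∞. Suppose (u, β, δ) and (u′, β′, δ′) both provide SH(T) discounted expected utility representations for ≽ on X^∞ (with convergent series). Then there exist A > 0 and B ∈ ℝ with u = Au′ + B, δ = δ′, and β_t = β′_t for all t = 1,…,T−1. -/
import Mathlib


/-- A mixture set: a set `X` with an operation `mix x l y` (written `xλy` in the paper),
satisfying the Herstein–Milnor axioms for `l, m ∈ [0,1]`. -/
structure MixtureSpace (X : Type*) where
  mix : X → ℝ → X → X
  mix_one : ∀ x y : X, mix x 1 y = x
  mix_comm : ∀ (x y : X), ∀ l ∈ Set.Icc (0:ℝ) 1, mix x l y = mix y (1 - l) x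
  mix_assoc : ∀ (x y : X), ∀ l ∈ Set.Icc (0:ℝ) 1, ∀ m ∈ Set.Icc (0:ℝ) 1,
    mix (mix x m y) l y = mix x (l * m) y

/-- `u : X → ℝ` is mixture linear. -/
def MixtureSpace.linear {X : Type*} (M : MixtureSpace X) (u : X → ℝ) : Prop :=
  ∀ (x y : X), ∀ l ∈ Set.Icc (0:ℝ) 1, u (M.mix x l y) = l * u x + (1 - l) * u y

/-- Strict (asymmetric) part of a relation. -/
def strictP {α : Type*} (R : α → α → Prop) (x y : α) : Prop := R x y ∧ ¬ R y x

/-- Componentwise mixture of finite streams. -/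
def mixStream {X : Type*} (M : MixtureSpace X) {n : ℕ} (x : Fin n → X) (l : ℝ)
    (y : Fin n → X) : Fin n → X := fun t => M.mix (x t) l (y t)

/-- Componentwise mixture of infinite streams. -/
def mixSeq {X : Type*} (M : MixtureSpace X) (x : ℕ → X) (l : ℝ) (y : ℕ → X) :
    ℕ → X := fun t => M.mix (x t) l (y t)

/-! ### Finite-horizon axioms -/

/-- F1: weak order (complete and transitive). -/
def AxF1 {X : Type*} {n : ℕ} (R : (Fin n → X) → (Fin n → X) → Prop) : Prop :=
  (∀ x y, R x y ∨ R y x) ∧ Transitive R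

/-- F2: non-triviality (a ≻ b for some a, b in the induced relation). -/
def AxF2 {X : Type*} {n : ℕ} (R : (Fin n → X) → (Fin n → X) → Prop) : Prop :=
  ∃ a b : X, strictP R (fun _ => a) (fun _ => b)

/-- F3: mixture independence. -/
def AxF3 {X : Type*} (M : MixtureSpace X) {n : ℕ}
    (R : (Fin n → X) → (Fin n → X) → Prop) : Prop :=
  ∀ x y z : Fin n → X, ∀ l ∈ Set.Ioo (0:ℝ) 1,
    (R x y ↔ R (mixStream M x l z) (mixStream M y l z))

/-- F4: mixture continuity. -/
def AxF4 {X : Type*} (M : MixtureSpace X) {n : ℕ}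
    (R : (Fin n → X) → (Fin n → X) → Prop) : Prop :=
  ∀ x y z : Fin n → X,
    IsClosed {l : ℝ | l ∈ Set.Icc (0:ℝ) 1 ∧ R (mixStream M x l z) y} ∧
    IsClosed {l : ℝ | l ∈ Set.Icc (0:ℝ) 1 ∧ R y (mixStream M x l z)}

/-- F5: monotonicity. -/
def AxF5 {X : Type*} {n : ℕ} (R : (Fin n → X) → (Fin n → X) → Prop) : Prop :=
  ∀ x y : Fin n → X, (∀ t, R (fun _ => x t) (fun _ => y t)) → R x y

/-- `(u, w)` provides an AA representation for `R` on `X^n`. -/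
def AARep {X : Type*} (M : MixtureSpace X) {n : ℕ}
    (R : (Fin n → X) → (Fin n → X) → Prop) (u : X → ℝ) (w : Fin n → ℝ) : Prop :=
  M.linear u ∧ (∃ a b : X, u a ≠ u b) ∧ (∀ t, 0 ≤ w t) ∧ (∃ t, 0 < w t) ∧
  ∀ x y : Fin n → X, (R x y ↔ (∑ t, w t * u (x t)) ≥ ∑ t, w t * u (y t))

/-! ### Infinite-horizon notions -/

/-- Ultimately constant stream (equals `x0` from some period on). -/
def UltConst {X : Type*} (x0 : X) (x : ℕ → X) : Prop := ∃ T, ∀ t, T ≤ t → x t = x0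

/-- Member of `X**`: ultimately constant or constant. -/
def InXSS {X : Type*} (x0 : X) (x : ℕ → X) : Prop :=
  UltConst x0 x ∨ ∃ a, ∀ t, x t = a

/-- `[a]_k`: the stream with `a` in period `k` and `x0` elsewhere. -/
def bracket {X : Type*} (x0 : X) (a : X) (k : ℕ) : ℕ → X :=
  fun t => if t = k then a else x0

/-- `(x₁, …, x_{k−1}, a, x_{k+1}, …, x_T, x0, x0, …)`. -/
def truncMod {X : Type*} (x0 : X) (x : ℕ → X) (k : ℕ) (a : X) (T : ℕ) : ℕ → X :=
  fun t => if t = k then a else if t ≤ T then x t else x0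

/-- I1: weak order. -/
def AxI1 {X : Type*} (R : (ℕ → X) → (ℕ → X) → Prop) : Prop :=
  (∀ x y, R x y ∨ R y x) ∧ Transitive R

/-- I2: non-triviality `a ≻ x0 ≻ b` in the induced relation. -/
def AxI2 {X : Type*} (x0 : X) (R : (ℕ → X) → (ℕ → X) → Prop) : Prop :=
  ∃ a b : X, strictP R (fun _ => a) (fun _ => x0) ∧ strictP R (fun _ => x0) (fun _ => b)

/-- I3: mixture independence on `X**`. -/
def AxI3 {X : Type*} (M : MixtureSpace X) (x0 : X)
    (R : (ℕ → X) → (ℕ → X) → Prop) : Prop :=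
  ∀ x y z : ℕ → X, InXSS x0 x → InXSS x0 y → InXSS x0 z →
    ∀ l ∈ Set.Ioo (0:ℝ) 1, (R x y ↔ R (mixSeq M x l z) (mixSeq M y l z))

/-- I4: mixture continuity. -/
def AxI4 {X : Type*} (M : MixtureSpace X) (x0 : X)
    (R : (ℕ → X) → (ℕ → X) → Prop) : Prop :=
  ∀ x z : ℕ → X, InXSS x0 x → InXSS x0 z → ∀ y : ℕ → X,
    IsClosed {l : ℝ | l ∈ Set.Icc (0:ℝ) 1 ∧ R (mixSeq M x l z) y} ∧
    IsClosed {l : ℝ | l ∈ Set.Icc (0:ℝ) 1 ∧ R y (mixSeq M x l z)}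

/-- I5: monotonicity. -/
def AxI5 {X : Type*} (R : (ℕ → X) → (ℕ → X) → Prop) : Prop :=
  ∀ x y : ℕ → X, (∀ t, R (fun _ => x t) (fun _ => y t)) → R x y

/-- I6: convergence. -/
def AxI6 {X : Type*} (x0 : X) (R : (ℕ → X) → (ℕ → X) → Prop) : Prop :=
  ∀ (x : ℕ → X) (a : X) (k : ℕ),
    (strictP R (bracket x0 a k) (bracket x0 (x k) k) →
      ∃ Tp, k ≤ Tp ∧ ∀ T, Tp ≤ T → R (truncMod x0 x k a T) x) ∧
    (strictP R (bracket x0 (x k) k) (bracket x0 a k) →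
      ∃ Tm, k ≤ Tm ∧ ∀ T, Tm ≤ T → R x (truncMod x0 x k a T))

/-- `(u, w)` provides an AA representation for `R` on `X^∞` (with its
discounted-utility series converging for every stream). -/
def AARepInf {X : Type*} (M : MixtureSpace X)
    (R : (ℕ → X) → (ℕ → X) → Prop) (u : X → ℝ) (w : ℕ → ℝ) : Prop :=
  M.linear u ∧ (∃ a b : X, u a ≠ u b) ∧ (∀ t, 0 ≤ w t) ∧ (∃ t, 0 < w t) ∧
  ∃ U : (ℕ → X) → ℝ,
    (∀ x : ℕ → X, Filter.Tendsto (fun N => ∑ t ∈ Finset.range N, w t * u (x t))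
      Filter.atTop (nhds (U x))) ∧
    ∀ x y : ℕ → X, (R x y ↔ U x ≥ U y)

/-! ### Exponential discounting -/

/-- F2′: essentiality of period 1. -/
def AxF2' {X : Type*} {n : ℕ} (R : (Fin n → X) → (Fin n → X) → Prop)
    (h0 : 0 < n) : Prop :=
  ∃ (a b : X) (x : Fin n → X),
    strictP R (Function.update x ⟨0, h0⟩ a) (Function.update x ⟨0, h0⟩ b)

/-- F6: impatience. -/
def AxF6 {X : Type*} {n : ℕ} (R : (Fin n → X) → (Fin n → X) → Prop)
    (h0 : 0 < n) (h1 : 1 < n) : Prop :=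
  ∀ a b : X, strictP R (fun _ => a) (fun _ => b) →
    ∀ x : Fin n → X,
      strictP R (Function.update (Function.update x ⟨0, h0⟩ a) ⟨1, h1⟩ b)
               (Function.update (Function.update x ⟨0, h0⟩ b) ⟨1, h1⟩ a)

/-- `(x₂, …, xₙ, a)`. -/
def shiftApp {X : Type*} {n : ℕ} (x : Fin n → X) (a : X) : Fin n → X :=
  fun t => if h : (t : ℕ) + 1 < n then x ⟨(t : ℕ) + 1, h⟩ else a

/-- F7: stationarity. -/
def AxF7 {X : Type*} {n : ℕ} (R : (Fin n → X) → (Fin n → X) → Prop)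
    (h0 : 0 < n) : Prop :=
  ∀ (a : X) (x y : Fin n → X),
    (R (Function.update x ⟨0, h0⟩ a) (Function.update y ⟨0, h0⟩ a) ↔
     R (shiftApp x a) (shiftApp y a))

/-- `(u, δ)` provides an exponentially discounted expected utility representation. -/
def ExpRep {X : Type*} (M : MixtureSpace X) {n : ℕ}
    (R : (Fin n → X) → (Fin n → X) → Prop) (u : X → ℝ) (δ : ℝ) : Prop :=
  M.linear u ∧ (∃ a b : X, u a ≠ u b) ∧ δ ∈ Set.Ioo (0:ℝ) 1 ∧
  ∀ x y : Fin n → X,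
    (R x y ↔ (∑ t : Fin n, δ ^ (t : ℕ) * u (x t)) ≥ ∑ t : Fin n, δ ^ (t : ℕ) * u (y t))

/-- I2′: essentiality of period 1 (infinite horizon). -/
def AxI2' {X : Type*} (x0 : X) (R : (ℕ → X) → (ℕ → X) → Prop) : Prop :=
  ∃ a b : X, strictP R (bracket x0 a 0) (fun _ => x0) ∧
    strictP R (fun _ => x0) (bracket x0 b 0)

/-- `(a, x₁, x₂, …)`. -/
def consSeq {X : Type*} (a : X) (x : ℕ → X) : ℕ → X :=
  fun t => if t = 0 then a else x (t - 1)

/-- I7: stationarity (infinite horizon). -/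
def AxI7 {X : Type*} (R : (ℕ → X) → (ℕ → X) → Prop) : Prop :=
  ∀ (a : X) (x y : ℕ → X), (R (consSeq a x) (consSeq a y) ↔ R x y)

/-- `(u, δ)` provides an exponentially discounted expected utility representation
on `X^∞`, with converging series. -/
def ExpRepInf {X : Type*} (M : MixtureSpace X)
    (R : (ℕ → X) → (ℕ → X) → Prop) (u : X → ℝ) (δ : ℝ) : Prop :=
  M.linear u ∧ (∃ a b : X, u a ≠ u b) ∧ δ ∈ Set.Ioo (0:ℝ) 1 ∧
  ∃ U : (ℕ → X) → ℝ,
    (∀ x : ℕ → X, Filter.Tendsto (fun N => ∑ t ∈ Finset.range N, δ ^ t * u (x t))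
      Filter.atTop (nhds (U x))) ∧
    ∀ x y : ℕ → X, (R x y ↔ U x ≥ U y)

/-! ### Semi-hyperbolic discounting -/

/-- The SH(T) discount function at (1-based) period `t`:
`D 1 = 1`, `D t = β₁⋯β_{t−1} δ^{t−1}` for `2 ≤ t ≤ T`,
`D t = β₁⋯β_{T−1} δ^{t−1}` for `t > T`. -/
noncomputable def SHD (T : ℕ) (β : ℕ → ℝ) (δ : ℝ) (t : ℕ) : ℝ :=
  (∏ i ∈ Finset.Icc 1 (min t T - 1), β i) * δ ^ (t - 1)

/-- Parameter restrictions: `0 < β₁ ≤ … ≤ β_{T−1} ≤ 1` and `δ ∈ (0,1)`. -/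
def SHParams (T : ℕ) (β : ℕ → ℝ) (δ : ℝ) : Prop :=
  (∀ i : ℕ, 1 ≤ i → i ≤ T - 1 → 0 < β i ∧ β i ≤ 1) ∧
  (∀ i : ℕ, 1 ≤ i → i + 1 ≤ T - 1 → β i ≤ β (i + 1)) ∧
  δ ∈ Set.Ioo (0:ℝ) 1

/-- `(u, β, δ)` provides an SH(T) discounted expected utility representation on `X^n`. -/
def SHRep {X : Type*} (M : MixtureSpace X) {n : ℕ}
    (R : (Fin n → X) → (Fin n → X) → Prop)
    (T : ℕ) (β : ℕ → ℝ) (δ : ℝ) (u : X → ℝ) : Prop :=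
  M.linear u ∧ (∃ a b : X, u a ≠ u b) ∧ SHParams T β δ ∧
  ∀ x y : Fin n → X,
    (R x y ↔ (∑ s : Fin n, SHD T β δ ((s : ℕ) + 1) * u (x s)) ≥
      ∑ s : Fin n, SHD T β δ ((s : ℕ) + 1) * u (y s))

/-- F2″: essentiality of (1-based) periods `1, …, T`. -/
def AxF2'' {X : Type*} {n : ℕ} (R : (Fin n → X) → (Fin n → X) → Prop)
    (T : ℕ) (hTn : T ≤ n) : Prop :=
  ∃ (a b : X) (x : Fin n → X), ∀ i : ℕ, ∀ hi : i < T,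
    strictP R (Function.update x ⟨i, lt_of_lt_of_le hi hTn⟩ a)
             (Function.update x ⟨i, lt_of_lt_of_le hi hTn⟩ b)

/-- F6′: impatience between (1-based) periods `T` and `T+1`. -/
def AxF6' {X : Type*} {n : ℕ} (R : (Fin n → X) → (Fin n → X) → Prop)
    (T : ℕ) (h1 : T - 1 < n) (h2 : T < n) : Prop :=
  ∀ a b : X, strictP R (fun _ => a) (fun _ => b) →
    ∀ x : Fin n → X,
      strictP R (Function.update (Function.update x ⟨T-1, h1⟩ a) ⟨T, h2⟩ b)
               (Function.update (Function.update x ⟨T-1, h1⟩ b) ⟨T, h2⟩ a)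

/-- Delete (0-based) coordinate `i`, shift the rest left, and append `a` at the end. -/
def delIns {X : Type*} {n : ℕ} (x : Fin n → X) (i : ℕ) (a : X) : Fin n → X :=
  fun s => if (s : ℕ) < i then x s
    else if h : (s : ℕ) + 1 < n then x ⟨(s : ℕ) + 1, h⟩ else a

/-- F7′: stationarity from (1-based) period `T`. -/
def AxF7' {X : Type*} {n : ℕ} (R : (Fin n → X) → (Fin n → X) → Prop)
    (T : ℕ) (h1 : T - 1 < n) : Prop :=
  ∀ (a : X) (x y : Fin n → X), (∀ s : Fin n, (s : ℕ) < T - 1 → x s = y s) →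
    (R (Function.update x ⟨T-1, h1⟩ a) (Function.update y ⟨T-1, h1⟩ a) ↔
     R (delIns x (T-1) a) (delIns y (T-1) a))

/-- `(x₁, …, x_{t−2}, a, b, x_{t+2}, …, xₙ, x_{t−1})` where `i` is the 0-based
index of period `t` (so `i = t − 1`). -/
def ebShiftFin {X : Type*} {n : ℕ} (x : Fin n → X) (i : ℕ) (hi : i - 1 < n)
    (a b : X) : Fin n → X :=
  fun s => if (s : ℕ) < i - 1 then x s
    else if (s : ℕ) = i - 1 then a
    else if (s : ℕ) = i then b
    else if h : (s : ℕ) + 1 < n then x ⟨(s : ℕ) + 1, h⟩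
    else x ⟨i - 1, hi⟩

/-- F8: early bias. -/
def AxF8 {X : Type*} {n : ℕ} (R : (Fin n → X) → (Fin n → X) → Prop)
    (T : ℕ) (hTn : T < n) : Prop :=
  ∀ a b c d : X,
    strictP R (fun _ => a) (fun _ => c) → strictP R (fun _ => d) (fun _ => b) →
    ∀ x : Fin n → X, ∀ i : ℕ, ∀ hi1 : 1 ≤ i, ∀ hi2 : i ≤ T - 1,
      (R (Function.update (Function.update x ⟨i, by omega⟩ a) ⟨i+1, by omega⟩ b)
         (Function.update (Function.update x ⟨i, by omega⟩ c) ⟨i+1, by omega⟩ d) ∧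
       R (Function.update (Function.update x ⟨i, by omega⟩ c) ⟨i+1, by omega⟩ d)
         (Function.update (Function.update x ⟨i, by omega⟩ a) ⟨i+1, by omega⟩ b)) →
      R (ebShiftFin x i (by omega) a b) (ebShiftFin x i (by omega) c d)

/-- `(u, β, δ)` provides an SH(T) discounted expected utility representation on `X^∞`. -/
def SHRepInf {X : Type*} (M : MixtureSpace X)
    (R : (ℕ → X) → (ℕ → X) → Prop)
    (T : ℕ) (β : ℕ → ℝ) (δ : ℝ) (u : X → ℝ) : Prop :=
  M.linear u ∧ (∃ a b : X, u a ≠ u b) ∧ SHParams T β δ ∧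
  ∃ U : (ℕ → X) → ℝ,
    (∀ x : ℕ → X, Filter.Tendsto
      (fun N => ∑ t ∈ Finset.range N, SHD T β δ (t + 1) * u (x t))
      Filter.atTop (nhds (U x))) ∧
    ∀ x y : ℕ → X, (R x y ↔ U x ≥ U y)

/-- I2″: essentiality of (1-based) periods `1, …, T`. -/
def AxI2'' {X : Type*} (x0 : X) (R : (ℕ → X) → (ℕ → X) → Prop) (T : ℕ) : Prop :=
  ∃ a b : X, ∀ t : ℕ, t < T →
    strictP R (bracket x0 a t) (fun _ => x0) ∧ strictP R (fun _ => x0) (bracket x0 b t)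

/-- Delete (0-based) coordinate `i` of an infinite stream. -/
def delSeq {X : Type*} (x : ℕ → X) (i : ℕ) : ℕ → X :=
  fun t => if t < i then x t else x (t + 1)

/-- I7′: stationarity from (1-based) period `T`. -/
def AxI7' {X : Type*} (R : (ℕ → X) → (ℕ → X) → Prop) (T : ℕ) : Prop :=
  ∀ (a : X) (x y : ℕ → X), (∀ t, t < T - 1 → x t = y t) →
    (R (Function.update x (T-1) a) (Function.update y (T-1) a) ↔
     R (delSeq x (T-1)) (delSeq y (T-1)))

/-- `(x₁, …, x_{t−2}, a, b, x_{t+2}, …)` where `i = t − 1` (0-based index of period `t`). -/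
def ebShiftSeq {X : Type*} (x : ℕ → X) (i : ℕ) (a b : X) : ℕ → X :=
  fun s => if s < i - 1 then x s
    else if s = i - 1 then a
    else if s = i then b
    else x (s + 1)

/-- I8: early bias (infinite horizon). -/
def AxI8 {X : Type*} (R : (ℕ → X) → (ℕ → X) → Prop) (T : ℕ) : Prop :=
  ∀ a b c d : X,
    strictP R (fun _ => a) (fun _ => c) → strictP R (fun _ => d) (fun _ => b) →
    ∀ x : ℕ → X, ∀ i : ℕ, 1 ≤ i → i ≤ T - 1 →
      (R (Function.update (Function.update x i a) (i+1) b)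
         (Function.update (Function.update x i c) (i+1) d) ∧
       R (Function.update (Function.update x i c) (i+1) d)
         (Function.update (Function.update x i a) (i+1) b)) →
      R (ebShiftSeq x i a b) (ebShiftSeq x i c d)

/-! ### Auxiliary lemmas for the uniqueness theorem -/

lemma SHD_one' (T : ℕ) (β : ℕ → ℝ) (δ : ℝ) : SHD T β δ 1 = 1 := by
  have h : min 1 T - 1 = 0 := by omega
  simp [SHD, h]

lemma SHD_pos' {T : ℕ} {β : ℕ → ℝ} {δ : ℝ} (hp : SHParams T β δ) (t : ℕ) :
    0 < SHD T β δ (t + 1) := by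
  have hδ := hp.2.2.1
  apply mul_pos
  · apply Finset.prod_pos
    intro i hi
    rw [Finset.mem_Icc] at hi
    have hm : min (t + 1) T ≤ T := min_le_right _ _
    exact (hp.1 i hi.1 (by omega)).1
  · positivity

lemma SHD_prod_le_one' {T : ℕ} {β : ℕ → ℝ} {δ : ℝ} (hp : SHParams T β δ) (t : ℕ) :
    (∏ i ∈ Finset.Icc 1 (min (t + 1) T - 1), β i) ≤ 1 := by
  apply Finset.prod_le_one
  · intro i hi
    rw [Finset.mem_Icc] at hi
    have hm : min (t + 1) T ≤ T := min_le_right _ _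
    exact (hp.1 i hi.1 (by omega)).1.le
  · intro i hi
    rw [Finset.mem_Icc] at hi
    have hm : min (t + 1) T ≤ T := min_le_right _ _
    exact (hp.1 i hi.1 (by omega)).2

lemma SHD_le_geom' {T : ℕ} {β : ℕ → ℝ} {δ : ℝ} (hp : SHParams T β δ) (t : ℕ) :
    SHD T β δ (t + 1) ≤ δ ^ t := by
  have hδ := hp.2.2.1
  have h1 := SHD_prod_le_one' hp t
  have h2 : (0:ℝ) ≤ δ ^ t := by positivity
  have : SHD T β δ (t + 1) = (∏ i ∈ Finset.Icc 1 (min (t + 1) T - 1), β i) * δ ^ t := by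
    simp [SHD]
  rw [this]
  nlinarith

lemma SHD_le_one' {T : ℕ} {β : ℕ → ℝ} {δ : ℝ} (hp : SHParams T β δ) (t : ℕ) :
    SHD T β δ (t + 1) ≤ 1 := by
  have hδ := hp.2.2
  have h := SHD_le_geom' hp t
  have : δ ^ t ≤ 1 := pow_le_one₀ hδ.1.le hδ.2.le
  linarith

lemma SHD_summable' {T : ℕ} {β : ℕ → ℝ} {δ : ℝ} (hp : SHParams T β δ) :
    Summable (fun t => SHD T β δ (t + 1)) := by
  have hδ := hp.2.2
  exact Summable.of_nonneg_of_le (fun t => (SHD_pos' hp t).le) (SHD_le_geom' hp)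
    (summable_geometric_of_lt_one hδ.1.le hδ.2)

/-- Limit of partial sums for a "bracket" stream. -/
lemma tendsto_bracket_sum {X : Type*} (u : X → ℝ) (D : ℕ → ℝ) {S : ℝ}
    (hS : Filter.Tendsto (fun N => ∑ t ∈ Finset.range N, D t) Filter.atTop (nhds S))
    (c b : X) (k : ℕ) :
    Filter.Tendsto (fun N => ∑ t ∈ Finset.range N, D t * u (if t = k then c else b))
      Filter.atTop (nhds (S * u b + D k * (u c - u b))) := by
  have h1 : Filter.Tendsto
      (fun N => (∑ t ∈ Finset.range N, D t) * u b + D k * (u c - u b))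
      Filter.atTop (nhds (S * u b + D k * (u c - u b))) :=
    (hS.mul_const (u b)).add_const _
  refine Filter.Tendsto.congr' ?_ h1
  filter_upwards [Filter.eventually_ge_atTop (k + 1)] with N hN
  have hk : k ∈ Finset.range N := Finset.mem_range.2 (by omega)
  have step : ∀ t ∈ Finset.range N,
      D t * u (if t = k then c else b)
        = D t * u b + (if t = k then D k * (u c - u b) else 0) := by
    intro t _
    by_cases h : t = k
    · subst h; simp; ring
    · simp [h]
  rw [Finset.sum_congr rfl step, Finset.sum_add_distrib,
    Finset.sum_ite_eq' (Finset.range N) k, if_pos hk, Finset.sum_mul]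

/-- Affine relation between two mixture-linear functions representing the same order. -/
lemma affine_of_order_equiv {X : Type*} (M : MixtureSpace X) (u u' : X → ℝ)
    (hu : M.linear u) (hu' : M.linear u') (a b : X) (hab : u b < u a)
    (hequiv : ∀ x y : X, u x ≥ u y ↔ u' x ≥ u' y) :
    ∃ A > (0:ℝ), ∃ B : ℝ, ∀ x : X, u x = A * u' x + B := by
  have heq : ∀ x y : X, u x = u y → u' x = u' y := by
    intro x y hxy
    exact le_antisymm ((hequiv y x).1 hxy.le) ((hequiv x y).1 hxy.ge)
  have hab' : u' b < u' a := by
    have h1 : ¬ (u b ≥ u a) := not_le.2 hab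
    have h2 : ¬ (u' b ≥ u' a) := fun hc => h1 ((hequiv b a).2 hc)
    exact not_le.1 h2
  have hα : 0 < u a - u b := by linarith
  have hα' : 0 < u' a - u' b := by linarith
  refine ⟨(u a - u b) / (u' a - u' b), by positivity,
    u b - (u a - u b) / (u' a - u' b) * u' b, ?_⟩
  intro x
  -- it suffices to show (u x - u b) * (u' a - u' b) = (u' x - u' b) * (u a - u b)
  suffices hmain : (u x - u b) * (u' a - u' b) = (u' x - u' b) * (u a - u b) by
    field_simp
    linarith [hmain]
  rcases le_or_gt (u x) (u a) with hxa | hxa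
  · rcases le_or_gt (u b) (u x) with hbx | hbx
    · -- u b ≤ u x ≤ u a
      set l := (u x - u b) / (u a - u b) with hl
      have hlI : l ∈ Set.Icc (0:ℝ) 1 :=
        ⟨div_nonneg (by linarith) hα.le, (div_le_one hα).2 (by linarith)⟩
      have hum : u (M.mix a l b) = l * u a + (1 - l) * u b := hu a b l hlI
      have humx : u (M.mix a l b) = u x := by
        rw [hum, hl]; field_simp; ring
      have hum' : u' (M.mix a l b) = l * u' a + (1 - l) * u' b := hu' a b l hlI
      have h2 : u' x = l * u' a + (1 - l) * u' b := by
        rw [← hum']; exact (heq _ _ humx).symm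
      rw [h2, hl]
      field_simp
      ring
    · -- u x < u b : mix a and x to hit u b
      set l := (u b - u x) / (u a - u x) with hl
      have hax : 0 < u a - u x := by linarith
      have hlI : l ∈ Set.Icc (0:ℝ) 1 :=
        ⟨div_nonneg (by linarith) hax.le, (div_le_one hax).2 (by linarith)⟩
      have hum : u (M.mix a l x) = l * u a + (1 - l) * u x := hu a x l hlI
      have humb : u (M.mix a l x) = u b := by
        rw [hum, hl]; field_simp; ring
      have hum' : u' (M.mix a l x) = l * u' a + (1 - l) * u' x := hu' a x l hlI
      have h2 : l * u' a + (1 - l) * u' x = u' b := by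
        rw [← hum']; exact heq _ _ humb
      rw [hl] at h2
      have hE : (u b - u x) * (u' a - u' x) = (u' b - u' x) * (u a - u x) := by
        field_simp at h2
        linarith [h2]
      linear_combination -hE
  · -- u a < u x : mix x and b to hit u a
    set l := (u a - u b) / (u x - u b) with hl
    have hxb : 0 < u x - u b := by linarith
    have hlI : l ∈ Set.Icc (0:ℝ) 1 :=
      ⟨div_nonneg hα.le hxb.le, (div_le_one hxb).2 (by linarith)⟩
    have hum : u (M.mix x l b) = l * u x + (1 - l) * u b := hu x b l hlI
    have huma : u (M.mix x l b) = u a := by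
      rw [hum, hl]; field_simp; ring
    have hum' : u' (M.mix x l b) = l * u' x + (1 - l) * u' b := hu' x b l hlI
    have h2 : l * u' x + (1 - l) * u' b = u' a := by
      rw [← hum']; exact heq _ _ huma
    rw [hl] at h2
    have hE : (u a - u b) * (u' x - u' b) = (u' a - u' b) * (u x - u b) := by
      field_simp at h2
      linarith [h2]
    linear_combination -hE

/-- Uniqueness of the SH(T) discounted expected utility
representation on `X^∞`. -/
theorem sh_discounting_infinite_unique {X : Type*} (M : MixtureSpace X)
    (T : ℕ) (hT : 1 ≤ T) (R : (ℕ → X) → (ℕ → X) → Prop)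
    (u u' : X → ℝ) (β β' : ℕ → ℝ) (δ δ' : ℝ)
    (h : SHRepInf M R T β δ u) (h' : SHRepInf M R T β' δ' u') :
    (∃ A > (0:ℝ), ∃ B : ℝ, ∀ x : X, u x = A * u' x + B) ∧ δ = δ' ∧
    ∀ t : ℕ, 1 ≤ t → t ≤ T - 1 → β t = β' t := by
  obtain ⟨hlin, ⟨a0, b0, hne⟩, hpar, U, hU, hrep⟩ := h
  obtain ⟨hlin', ⟨a0', b0', hne'⟩, hpar', U', hU', hrep'⟩ := h'
  have hδ := hpar.2.2
  have hδ' := hpar'.2.2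
  -- summability and sums
  have hsum : Summable (fun t => SHD T β δ (t + 1)) := SHD_summable' hpar
  have hsum' : Summable (fun t => SHD T β' δ' (t + 1)) := SHD_summable' hpar'
  set S : ℝ := ∑' t, SHD T β δ (t + 1) with hSdef
  set S' : ℝ := ∑' t, SHD T β' δ' (t + 1) with hS'def
  have hS : Filter.Tendsto (fun N => ∑ t ∈ Finset.range N, SHD T β δ (t + 1))
      Filter.atTop (nhds S) := hsum.hasSum.tendsto_sum_nat
  have hS' : Filter.Tendsto (fun N => ∑ t ∈ Finset.range N, SHD T β' δ' (t + 1))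
      Filter.atTop (nhds S') := hsum'.hasSum.tendsto_sum_nat
  have hSpos : 0 < S := Summable.tsum_pos hsum (fun t => (SHD_pos' hpar t).le) 0 (SHD_pos' hpar 0)
  have hS'pos : 0 < S' := Summable.tsum_pos hsum' (fun t => (SHD_pos' hpar' t).le) 0 (SHD_pos' hpar' 0)
  -- values of U on bracket streams
  have hUb : ∀ (c b : X) (k : ℕ), U (fun t => if t = k then c else b)
      = S * u b + SHD T β δ (k + 1) * (u c - u b) := by
    intro c b k
    exact tendsto_nhds_unique (hU _) (tendsto_bracket_sum u (fun t => SHD T β δ (t + 1)) hS c b k)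
  have hUb' : ∀ (c b : X) (k : ℕ), U' (fun t => if t = k then c else b)
      = S' * u' b + SHD T β' δ' (k + 1) * (u' c - u' b) := by
    intro c b k
    exact tendsto_nhds_unique (hU' _)
      (tendsto_bracket_sum u' (fun t => SHD T β' δ' (t + 1)) hS' c b k)
  have hUc : ∀ a : X, U (fun _ => a) = S * u a := by
    intro a
    have hfe : (fun _ : ℕ => a) = (fun t : ℕ => if t = 0 then a else a) := by
      funext t; simp
    rw [hfe, hUb]; ring
  have hUc' : ∀ a : X, U' (fun _ => a) = S' * u' a := by
    intro a
    have hfe : (fun _ : ℕ => a) = (fun t : ℕ => if t = 0 then a else a) := by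
      funext t; simp
    rw [hfe, hUb']; ring
  -- u and u' represent the same order on X
  have hequiv : ∀ x y : X, u x ≥ u y ↔ u' x ≥ u' y := by
    intro x y
    have h1 := hrep (fun _ => x) (fun _ => y)
    have h2 := hrep' (fun _ => x) (fun _ => y)
    rw [hUc, hUc] at h1
    rw [hUc', hUc'] at h2
    constructor
    · intro hxy
      have hR : R (fun _ => x) (fun _ => y) := h1.2 (by nlinarith)
      have := h2.1 hR
      nlinarith
    · intro hxy
      have hR : R (fun _ => x) (fun _ => y) := h2.2 (by nlinarith)
      have := h1.1 hR
      nlinarith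
  -- choose a, b with u b < u a
  obtain ⟨a, b, hab⟩ : ∃ a b : X, u b < u a := by
    rcases lt_or_gt_of_ne hne with hc | hc
    · exact ⟨b0, a0, hc⟩
    · exact ⟨a0, b0, hc⟩
  have hab' : u' b < u' a := by
    have h1 : ¬ (u b ≥ u a) := not_le.2 hab
    have h2 : ¬ (u' b ≥ u' a) := fun hc => h1 ((hequiv b a).2 hc)
    exact not_le.1 h2
  -- equality of discount functions
  have hDeq : ∀ k : ℕ, SHD T β δ (k + 1) = SHD T β' δ' (k + 1) := by
    intro k
    have hl0 : 0 < SHD T β δ (k + 1) := SHD_pos' hpar k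
    have hl1 : SHD T β δ (k + 1) ≤ 1 := SHD_le_one' hpar k
    set l : ℝ := SHD T β δ (k + 1) with hldef
    have hlI : l ∈ Set.Icc (0:ℝ) 1 := ⟨hl0.le, hl1⟩
    have hum : u (M.mix a l b) = l * u a + (1 - l) * u b := hlin a b l hlI
    have hum' : u' (M.mix a l b) = l * u' a + (1 - l) * u' b := hlin' a b l hlI
    have hz := hUb (M.mix a l b) b 0
    have hw := hUb a b k
    have hone : SHD T β δ (0 + 1) = 1 := SHD_one' T β δ
    have heqU : U (fun t => if t = 0 then M.mix a l b else b)
        = U (fun t => if t = k then a else b) := by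
      rw [hz, hw, hone, hum]; ring
    have hR1 : R (fun t => if t = 0 then M.mix a l b else b) (fun t => if t = k then a else b) :=
      (hrep _ _).2 heqU.ge
    have hR2 : R (fun t => if t = k then a else b) (fun t => if t = 0 then M.mix a l b else b) :=
      (hrep _ _).2 heqU.le
    have heqU' : U' (fun t => if t = 0 then M.mix a l b else b)
        = U' (fun t => if t = k then a else b) :=
      le_antisymm ((hrep' _ _).1 hR2) ((hrep' _ _).1 hR1)
    rw [hUb', hUb', hum', SHD_one' T β' δ'] at heqU'
    have hfin : l * (u' a - u' b) = SHD T β' δ' (k + 1) * (u' a - u' b) := by linarith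
    exact mul_right_cancel₀ (sub_ne_zero.2 (ne_of_gt hab')) hfin
  -- δ = δ'
  have hm1 : min (T + 1) T - 1 = T - 1 := by omega
  have hm2 : min (T + 2) T - 1 = T - 1 := by omega
  have hPpos : 0 < ∏ i ∈ Finset.Icc 1 (T - 1), β i := by
    apply Finset.prod_pos
    intro i hi
    rw [Finset.mem_Icc] at hi
    exact (hpar.1 i hi.1 hi.2).1
  have e1 : (∏ i ∈ Finset.Icc 1 (T - 1), β i) * δ ^ T
      = (∏ i ∈ Finset.Icc 1 (T - 1), β' i) * δ' ^ T := by
    have := hDeq T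
    simp only [SHD, hm1, Nat.add_sub_cancel] at this
    exact this
  have e2 : (∏ i ∈ Finset.Icc 1 (T - 1), β i) * δ ^ (T + 1)
      = (∏ i ∈ Finset.Icc 1 (T - 1), β' i) * δ' ^ (T + 1) := by
    have := hDeq (T + 1)
    have hm2' : min (T + 1 + 1) T - 1 = T - 1 := by omega
    simp only [SHD, hm2', Nat.add_sub_cancel] at this
    exact this
  have hδeq : δ = δ' := by
    have hbase : (0:ℝ) < (∏ i ∈ Finset.Icc 1 (T - 1), β i) * δ ^ T :=
      mul_pos hPpos (pow_pos hδ.1 T)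
    have hcalc : δ * ((∏ i ∈ Finset.Icc 1 (T - 1), β i) * δ ^ T)
        = δ' * ((∏ i ∈ Finset.Icc 1 (T - 1), β i) * δ ^ T) := by
      calc δ * ((∏ i ∈ Finset.Icc 1 (T - 1), β i) * δ ^ T)
          = (∏ i ∈ Finset.Icc 1 (T - 1), β i) * δ ^ (T + 1) := by ring
        _ = (∏ i ∈ Finset.Icc 1 (T - 1), β' i) * δ' ^ (T + 1) := e2
        _ = δ' * ((∏ i ∈ Finset.Icc 1 (T - 1), β' i) * δ' ^ T) := by ring
        _ = δ' * ((∏ i ∈ Finset.Icc 1 (T - 1), β i) * δ ^ T) := by rw [← e1]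
    exact mul_right_cancel₀ (ne_of_gt hbase) hcalc
  refine ⟨affine_of_order_equiv M u u' hlin hlin' a b hab hequiv, hδeq, ?_⟩
  -- equality of the β parameters
  intro t ht1 ht2
  obtain ⟨s, rfl⟩ : ∃ s, t = s + 1 := ⟨t - 1, by omega⟩
  have hs2 : s + 1 ≤ T - 1 := ht2
  have hδT : δ ^ s ≠ 0 := pow_ne_zero _ (ne_of_gt hδ.1)
  have hδT1 : δ ^ (s + 1) ≠ 0 := pow_ne_zero _ (ne_of_gt hδ.1)
  -- products up to s are equal
  have hp1 : (∏ i ∈ Finset.Icc 1 s, β i) = ∏ i ∈ Finset.Icc 1 s, β' i := by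
    have := hDeq s
    have hm : min (s + 1) T - 1 = s := by omega
    simp only [SHD, hm, Nat.add_sub_cancel, ← hδeq] at this
    exact mul_right_cancel₀ hδT this
  -- products up to s+1 are equal
  have hp2 : (∏ i ∈ Finset.Icc 1 (s + 1), β i) = ∏ i ∈ Finset.Icc 1 (s + 1), β' i := by
    have := hDeq (s + 1)
    have hm : min (s + 1 + 1) T - 1 = s + 1 := by omega
    simp only [SHD, hm, Nat.add_sub_cancel, ← hδeq] at this
    exact mul_right_cancel₀ hδT1 this
  have hsplit : (∏ i ∈ Finset.Icc 1 (s + 1), β i) = (∏ i ∈ Finset.Icc 1 s, β i) * β (s + 1) :=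
    Finset.prod_Icc_succ_top (by omega) β
  have hsplit' : (∏ i ∈ Finset.Icc 1 (s + 1), β' i) = (∏ i ∈ Finset.Icc 1 s, β' i) * β' (s + 1) :=
    Finset.prod_Icc_succ_top (by omega) β'
  have hPspos : 0 < ∏ i ∈ Finset.Icc 1 s, β i := by
    apply Finset.prod_pos
    intro i hi
    rw [Finset.mem_Icc] at hi
    exact (hpar.1 i hi.1 (by omega)).1
  have hmul : (∏ i ∈ Finset.Icc 1 s, β i) * β (s + 1)
      = (∏ i ∈ Finset.Icc 1 s, β i) * β' (s + 1) := by
    rw [← hsplit, hp2, hsplit', ← hp1]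
  exact mul_left_cancel₀ (ne_of_gt hPspos) hmul
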